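/- Let $\mathcal{X} \in \mathbb{C}^{n_1 \times \cdots \times n_d}$. For each $1 \le k \le d-1$ there exists a TT representation of $\mathcal{X}$ whose $k$-th core size equals $\mathrm{rank}(X_k)$; in particular, the minimal TT rank $r_k$ satisfies $r_k \le \mathrm{rank}(X_k)$ for all $k$. -/

import Mathlib

/-!
Factor the `k`-th unfolding as `X_k = U V` with inner dimension `rank X_k`. Take as bond index
between modes `j - 1` and `j` the prefix multi-index `i_{<j}` for `j < k`, the rank index `ρ` at
`j = k`, and the suffix multi-index `i_{≥j}` for `j > k`. Left of `k` the cores are Kronecker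
deltas appending `i_j` to the prefix, right of `k` they strip `i_j` off the suffix, and the two
cores meeting at bond `k` carry `U` and `V`. For a fixed `i`, the only bond sequences with a
nonzero product are the paths determined by `i` and `ρ`, so the TT sum is
`∑ ρ, U i_{<k} ρ * V ρ i_{≥k} = X i`.
-/

/-- The `k`-th unfolding of a `d`-dimensional tensor. -/
def unfolding (d : ℕ) (n : Fin d → ℕ) (X : ((j : Fin d) → Fin (n j)) → ℂ) (k : ℕ) :
    Matrix ((j : {j : Fin d // (j : ℕ) < k}) → Fin (n j.1))
      ((j : {j : Fin d // ¬ (j : ℕ) < k}) → Fin (n j.1)) ℂ :=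
  Matrix.of fun row col =>
    X fun j => if h : (j : ℕ) < k then row ⟨j, h⟩ else col ⟨j, h⟩

theorem Matrix.exists_rank_factorization {K m n : Type*} [Field K] [Fintype m] [Fintype n]
    (M : Matrix m n K) :
    ∃ (U : Matrix m (Fin M.rank) K) (V : Matrix (Fin M.rank) n K), U * V = M := by
  let b := Module.finBasisOfFinrankEq K _ M.rank_eq_finrank_span_cols.symm
  have hcol (c : n) : M.col c ∈ Submodule.span K (Set.range M.col) :=
    Submodule.subset_span ⟨c, rfl⟩
  -- `U` has a basis of the column space as columns, `V` the coordinates of the columns of `M`.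
  refine ⟨.of fun a ρ => (b ρ : m → K) a, .of fun ρ c => b.repr ⟨_, hcol c⟩ ρ, ?_⟩
  ext a c
  have hc := congrArg (fun v : Submodule.span K (Set.range M.col) => (v : m → K) a)
    (b.sum_repr ⟨_, hcol c⟩)
  simp only [AddSubmonoidClass.coe_finsetSum, SetLike.val_smul, Finset.sum_apply, Pi.smul_apply,
    smul_eq_mul, Matrix.col_apply] at hc
  simpa [Matrix.mul_apply, mul_comm] using hc

namespace TensorTrain

variable {d : ℕ} (n : Fin d → ℕ)

abbrev PrefixIndex (j : ℕ) : Type := (t : {t : Fin d // (t : ℕ) < j}) → Fin (n t.1)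

abbrev SuffixIndex (j : ℕ) : Type := (t : {t : Fin d // ¬ (t : ℕ) < j}) → Fin (n t.1)

variable {n}

def restrictPrefix (i : (j : Fin d) → Fin (n j)) (j : ℕ) : PrefixIndex n j := fun t => i t.1

def restrictSuffix (i : (j : Fin d) → Fin (n j)) (j : ℕ) : SuffixIndex n j := fun t => i t.1

def PrefixIndex.snoc {j : ℕ} (hj : j < d) (p : PrefixIndex n j) (x : Fin (n ⟨j, hj⟩)) :
    PrefixIndex n (j + 1) :=
  fun t => if h : (t.1 : ℕ) < j then p ⟨t.1, h⟩
    else Fin.cast (congrArg n (Fin.ext (by simp only; omega))) x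

def SuffixIndex.cons {j : ℕ} (hj : j < d) (x : Fin (n ⟨j, hj⟩)) (q : SuffixIndex n (j + 1)) :
    SuffixIndex n j :=
  fun t => if h : (t.1 : ℕ) < j + 1 then Fin.cast (congrArg n (Fin.ext (by simp only; omega))) x
    else q ⟨t.1, h⟩

variable (i : (j : Fin d) → Fin (n j))

theorem unfolding_apply_restrict (X : ((j : Fin d) → Fin (n j)) → ℂ) (k : ℕ) :
    unfolding d n X k (restrictPrefix i k) (restrictSuffix i k) = X i := by
  simp only [unfolding, Matrix.of_apply]
  congr 1
  funext j
  split_ifs <;> rfl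

theorem snoc_restrictPrefix {j : ℕ} (hj : j < d) :
    (restrictPrefix i j).snoc hj (i ⟨j, hj⟩) = restrictPrefix i (j + 1) := by
  funext ⟨t, ht⟩
  by_cases h : (t : ℕ) < j
  · simp [PrefixIndex.snoc, restrictPrefix, h]
  · obtain rfl : t = ⟨j, hj⟩ := Fin.ext (by simp only at ht ⊢; omega)
    simp [PrefixIndex.snoc, restrictPrefix]

theorem cons_restrictSuffix {j : ℕ} (hj : j < d) :
    (restrictSuffix i (j + 1)).cons hj (i ⟨j, hj⟩) = restrictSuffix i j := by
  funext ⟨t, ht⟩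
  by_cases h : (t : ℕ) < j + 1
  · obtain rfl : t = ⟨j, hj⟩ := Fin.ext (by simp only at ht ⊢; omega)
    simp [SuffixIndex.cons, restrictSuffix]
  · simp [SuffixIndex.cons, restrictSuffix, h]

theorem cast_restrictPrefix {j j' : ℕ} (h : j = j') :
    cast (congrArg (PrefixIndex n) h) (restrictPrefix i j) = restrictPrefix i j' := by
  subst h; rfl

theorem cast_restrictSuffix {j j' : ℕ} (h : j = j') :
    cast (congrArg (SuffixIndex n) h) (restrictSuffix i j) = restrictSuffix i j' := by
  subst h; rfl

instance : Unique (PrefixIndex n 0) :=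
  have : IsEmpty {t : Fin d // (t : ℕ) < 0} := ⟨fun t => by omega⟩
  Pi.uniqueOfIsEmpty _

instance : Unique (SuffixIndex n d) :=
  have : IsEmpty {t : Fin d // ¬ (t : ℕ) < d} := ⟨fun t => t.2 t.1.2⟩
  Pi.uniqueOfIsEmpty _

variable (n) in
def Bond (k r j : ℕ) : Type :=
  if j < k then PrefixIndex n j else if j = k then Fin r else SuffixIndex n j

namespace Bond

variable {k r j : ℕ}

instance : Fintype (Bond n k r j) := by
  unfold Bond; split_ifs <;> infer_instance

def equivPrefix (h : j < k) : Bond n k r j ≃ PrefixIndex n j := Equiv.cast (if_pos h)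

def equivFin (h : j = k) : Bond n k r j ≃ Fin r :=
  Equiv.cast (by rw [Bond, if_neg h.not_lt, if_pos h])

def equivSuffix (h : k < j) : Bond n k r j ≃ SuffixIndex n j :=
  Equiv.cast (by rw [Bond, if_neg (by omega), if_neg (by omega)])

theorem card_zero (hk : 0 < k) : Fintype.card (Bond n k r 0) = 1 :=
  (Fintype.card_congr (equivPrefix hk)).trans Fintype.card_unique

theorem card_self : Fintype.card (Bond n k r k) = r :=
  (Fintype.card_congr (equivFin rfl)).trans (Fintype.card_fin r)

theorem card_last (hk : k < d) : Fintype.card (Bond n k r d) = 1 :=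
  (Fintype.card_congr (equivSuffix hk)).trans Fintype.card_unique

end Bond

open Bond

variable {k r : ℕ}

def path (ρ : Fin r) (j : ℕ) : Bond n k r j :=
  if h : j < k then (equivPrefix h).symm (restrictPrefix i j)
  else if h' : j = k then (equivFin h').symm ρ
  else (equivSuffix (by omega)).symm (restrictSuffix i j)

variable {i}

theorem equivPrefix_path {ρ : Fin r} {j : ℕ} (h : j < k) :
    equivPrefix h (path i ρ j) = restrictPrefix i j := by
  simp [path, h]

theorem equivFin_path {ρ : Fin r} {j : ℕ} (h : j = k) : equivFin h (path i ρ j) = ρ := by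
  simp [path, h]

theorem equivSuffix_path {ρ : Fin r} {j : ℕ} (h : k < j) :
    equivSuffix h (path i ρ j) = restrictSuffix i j := by
  simp [path, h.ne', Nat.not_lt.2 h.le]

theorem path_injective (hk : k ≤ d) :
    Function.Injective fun (ρ : Fin r) (j : Fin (d + 1)) => (path i ρ j : Bond n k r j) := by
  intro ρ ρ' h
  have hk := congrArg (equivFin rfl) (congrFun h ⟨k, by omega⟩)
  rwa [equivFin_path, equivFin_path] at hk

section Core

variable {R : Type*} [CommSemiring R] (U : Matrix (PrefixIndex n k) (Fin r) R)
  (V : Matrix (Fin r) (SuffixIndex n k) R)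

def core (j : Fin d) (a : Bond n k r j) (x : Fin (n j)) (b : Bond n k r (j + 1)) : R :=
  if h₁ : (j : ℕ) + 1 < k then
    if equivPrefix h₁ b = (equivPrefix (by omega) a).snoc j.2 x then 1 else 0
  else if h₂ : (j : ℕ) + 1 = k then
    U (cast (congrArg (PrefixIndex n) h₂) ((equivPrefix (by omega) a).snoc j.2 x))
      (equivFin h₂ b)
  else if h₃ : (j : ℕ) = k then
    V (equivFin h₃ a)
      (cast (congrArg (SuffixIndex n) h₃) ((equivSuffix (by omega) b).cons j.2 x))
  else
    if equivSuffix (by omega) a = (equivSuffix (by omega) b).cons j.2 x then 1 else 0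

variable {U V} {j : Fin d}

theorem core_path_of_succ_lt {ρ : Fin r} (h : (j : ℕ) + 1 < k) :
    core U V j (path i ρ j) (i j) (path i ρ (j + 1)) = 1 := by
  rw [core, dif_pos h, equivPrefix_path, equivPrefix_path, snoc_restrictPrefix, if_pos rfl]

theorem core_path_of_succ_eq {ρ : Fin r} (h : (j : ℕ) + 1 = k) :
    core U V j (path i ρ j) (i j) (path i ρ (j + 1)) = U (restrictPrefix i k) ρ := by
  rw [core, dif_neg (by omega), dif_pos h, equivPrefix_path, snoc_restrictPrefix,
    cast_restrictPrefix i h, equivFin_path]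

theorem core_path_of_eq {ρ : Fin r} (h : (j : ℕ) = k) :
    core U V j (path i ρ j) (i j) (path i ρ (j + 1)) = V ρ (restrictSuffix i k) := by
  rw [core, dif_neg (by omega), dif_neg (by omega), dif_pos h, equivSuffix_path,
    cons_restrictSuffix, cast_restrictSuffix i h, equivFin_path]

theorem core_path_of_lt {ρ : Fin r} (h : k < j) :
    core U V j (path i ρ j) (i j) (path i ρ (j + 1)) = 1 := by
  rw [core, dif_neg (by omega), dif_neg (by omega), dif_neg (by omega), equivSuffix_path,
    equivSuffix_path, cons_restrictSuffix, if_pos rfl]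

theorem eq_snoc_of_core_ne_zero {a : Bond n k r j} {x : Fin (n j)} {b : Bond n k r (j + 1)}
    (h : (j : ℕ) + 1 < k) (hc : core U V j a x b ≠ 0) :
    equivPrefix h b = (equivPrefix (by omega) a).snoc j.2 x := by
  rw [core, dif_pos h] at hc
  exact of_not_not fun hne => hc (if_neg hne)

theorem eq_cons_of_core_ne_zero {a : Bond n k r j} {x : Fin (n j)} {b : Bond n k r (j + 1)}
    (h : k < j) (hc : core U V j a x b ≠ 0) :
    equivSuffix h a = (equivSuffix (by omega) b).cons j.2 x := by
  rw [core, dif_neg (by omega), dif_neg (by omega), dif_neg (by omega)] at hc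
  exact of_not_not fun hne => hc (if_neg hne)

theorem prod_core_path (hk₀ : 0 < k) (hk : k < d) (ρ : Fin r) :
    ∏ j : Fin d, core U V j (path i ρ j) (i j) (path i ρ (j + 1)) =
      U (restrictPrefix i k) ρ * V ρ (restrictSuffix i k) := by
  rw [Fintype.prod_eq_mul ⟨k - 1, by omega⟩ ⟨k, hk⟩ (by simp [Fin.ext_iff]; omega)]
  · exact congrArg₂ (· * ·) (core_path_of_succ_eq (by simp; omega)) (core_path_of_eq rfl)
  · rintro j ⟨hj₁, hj₂⟩
    simp only [ne_eq, Fin.ext_iff] at hj₁ hj₂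
    rcases lt_or_gt_of_ne hj₂ with h | h
    · exact core_path_of_succ_lt (by omega)
    · exact core_path_of_lt h

section Support

variable {β : (j : Fin (d + 1)) → Bond n k r j}
  (hβ : ∀ j : Fin d, core U V j (β j.castSucc) (i j) (β j.succ) ≠ 0)
include hβ

theorem equivPrefix_eq_of_core_ne_zero (j : Fin (d + 1)) (h : (j : ℕ) < k) :
    equivPrefix h (β j) = restrictPrefix i j := by
  induction j using Fin.induction with
  | zero => exact @Subsingleton.elim (PrefixIndex n 0) _ _ _
  | succ j ih =>
    rw [eq_snoc_of_core_ne_zero h (hβ j), ih (by simp at h ⊢; omega)]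
    exact snoc_restrictPrefix i j.2

theorem equivSuffix_eq_of_core_ne_zero (j : Fin (d + 1)) (h : k < j) :
    equivSuffix h (β j) = restrictSuffix i j := by
  induction j using Fin.reverseInduction with
  | last => exact @Subsingleton.elim (SuffixIndex n d) _ _ _
  | cast j ih =>
    rw [eq_cons_of_core_ne_zero (j := j) h (hβ j), ih (by simp at h ⊢; omega)]
    exact cons_restrictSuffix i j.2

theorem eq_path_of_core_ne_zero (hk : k ≤ d) :
    β = fun j : Fin (d + 1) => path i (equivFin rfl (β ⟨k, by omega⟩)) j := by
  funext j
  rcases lt_trichotomy (j : ℕ) k with h | h | h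
  · exact (equivPrefix h).injective
      (by rw [equivPrefix_path, equivPrefix_eq_of_core_ne_zero hβ j h])
  · subst h
    exact (equivFin rfl).injective (by rw [equivFin_path])
  · exact (equivSuffix h).injective
      (by rw [equivSuffix_path, equivSuffix_eq_of_core_ne_zero hβ j h])

end Support

theorem sum_prod_core (hk₀ : 0 < k) (hk : k < d) :
    ∑ β : (j : Fin (d + 1)) → Bond n k r j,
        ∏ j : Fin d, core U V j (β j.castSucc) (i j) (β j.succ) =
      ∑ ρ, U (restrictPrefix i k) ρ * V ρ (restrictSuffix i k) := by
  refine (Fintype.sum_of_injective _ (path_injective hk.le) _ _ ?_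
    fun ρ => (prod_core_path hk₀ hk ρ).symm).symm
  intro β hβ
  by_contra hne
  exact hβ ⟨equivFin rfl (β ⟨k, by omega⟩), (eq_path_of_core_ne_zero
    (fun j hj => hne (Finset.prod_eq_zero (Finset.mem_univ j) hj)) hk.le).symm⟩

end Core

section Representation

variable {R : Type*} [CommSemiring R] {B : Fin (d + 1) → Type*} [∀ j, Fintype (B j)]

def IsRepresentation (X : ((j : Fin d) → Fin (n j)) → R)
    (G : (j : Fin d) → B j.castSucc → Fin (n j) → B j.succ → R) : Prop :=
  ∀ i, X i = ∑ β : (j : Fin (d + 1)) → B j,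
    ∏ j : Fin d, G j (β j.castSucc) (i j) (β j.succ)

variable {X : ((j : Fin d) → Fin (n j)) → R}
  {G : (j : Fin d) → B j.castSucc → Fin (n j) → B j.succ → R}

theorem IsRepresentation.reindex (hG : IsRepresentation X G) {B' : Fin (d + 1) → Type*}
    [∀ j, Fintype (B' j)] (e : ∀ j, B' j ≃ B j) :
    IsRepresentation X fun j a x b => G j (e _ a) x (e _ b) := fun i =>
  (hG i).trans (Fintype.sum_equiv (Equiv.piCongrRight e) _ _ fun _ => rfl).symm

theorem IsRepresentation.exists_fin_card (hG : IsRepresentation X G) :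
    ∃ G' : (j : Fin d) → Fin (Fintype.card (B j.castSucc)) → Fin (n j) →
      Fin (Fintype.card (B j.succ)) → R,
      IsRepresentation (B := fun j => Fin (Fintype.card (B j))) X G' :=
  ⟨_, hG.reindex fun j => (Fintype.equivFin (B j)).symm⟩

theorem isRepresentation_core {U : Matrix (PrefixIndex n k) (Fin r) R}
    {V : Matrix (Fin r) (SuffixIndex n k) R} (hk₀ : 0 < k) (hk : k < d)
    (hX : ∀ i, X i = ∑ ρ, U (restrictPrefix i k) ρ * V ρ (restrictSuffix i k)) :
    IsRepresentation (B := fun j => Bond n k r j) X (core U V) := fun i =>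
  (hX i).trans (sum_prod_core hk₀ hk).symm

end Representation

end TensorTrain

open TensorTrain

/-- For each `1 ≤ k ≤ d-1` there is a TT representation of `X` whose `k`-th
core size equals the rank of the `k`-th unfolding; in particular the minimal
TT rank `r_k` satisfies `r_k ≤ rank X_k`. -/
theorem exists_TT_with_core_size_eq_unfolding_rank (d : ℕ) (n : Fin d → ℕ)
    (X : ((j : Fin d) → Fin (n j)) → ℂ)
    (k : ℕ) (hk1 : 1 ≤ k) (hk2 : k ≤ d - 1) :
    ∃ s : Fin (d + 1) → ℕ, s 0 = 1 ∧ s (Fin.last d) = 1 ∧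
      s ⟨k, by omega⟩ = (unfolding d n X k).rank ∧
      ∃ G : (j : Fin d) → Fin (s j.castSucc) → Fin (n j) → Fin (s j.succ) → ℂ,
        ∀ i, X i = ∑ α : (j : Fin (d + 1)) → Fin (s j),
          ∏ j : Fin d, G j (α j.castSucc) (i j) (α j.succ) := by
  have hkd : k < d := by omega
  obtain ⟨U, V, hUV⟩ := (unfolding d n X k).exists_rank_factorization
  have hX : IsRepresentation (B := fun j => Bond n k _ j) X (core U V) :=
    isRepresentation_core hk1 hkd fun i => by
      rw [← Matrix.mul_apply, hUV, unfolding_apply_restrict]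
  exact ⟨fun j => Fintype.card (Bond n k (unfolding d n X k).rank j), Bond.card_zero hk1,
    Bond.card_last hkd, Bond.card_self, hX.exists_fin_card⟩
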